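/- Let D > 1 be a squarefree integer with D ≡ 1 or 2 (mod 4) such that every element of the ideal class group of ℚ(√−D) has order dividing 2. Let p₁, …, p_k be distinct odd primes with Legendre symbol (−D/pᵢ) = 1 and let e₁, …, e_k be integers. If ζ_{p₁}^{e₁} ⋯ ζ_{p_k}^{e_k} ∈ {1, −1}, then e₁ = ⋯ = e_k = 0 (and the product equals 1); in particular the elements ζ_{p₁}, …, ζ_{p_k} are multiplicatively independent in ℂ. -/

import Mathlib

/-!
Put `α_j = x_j + y_j √-D ∈ ℤ[√-D]`, so that `ζ_j = α_j / p_j` and `ζ_j⁻¹ = conj α_j / p_j`.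
Clearing denominators turns `∏ ζ_j ^ e_j = ±1` into `∏ β_j ^ |e_j| = ±∏ p_j ^ |e_j|` in `ℤ[√-D]`,
with `β_j ∈ {α_j, conj α_j}`. Fix `i`. As `-D` is a square modulo `p_i`, Hensel's lemma gives ring
maps `ℤ[√-D] → ℤ_[p_i]`; since `β_i + conj β_i = 2 x_i` is a `p_i`-adic unit, one of them sends
`β_i` to a unit, and it sends every other `β_j` to a unit because their norms `p_j²` are prime to
`p_i`. Hence `p_i ^ |e_i|` is a unit of `ℤ_[p_i]`, i.e. `e_i = 0`.
-/

open Complex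

theorem zpow_mul_pow_natAbs {K : Type*} [Field K] (x c : K) (e : ℤ) :
    x ^ e * c ^ e.natAbs = (if 0 ≤ e then x * c else x⁻¹ * c) ^ e.natAbs := by
  obtain ⟨n, rfl | rfl⟩ := Int.eq_nat_or_neg e
  · simp [mul_pow]
  · rcases n.eq_zero_or_pos with rfl | hn
    · simp
    · rw [Int.natAbs_neg, Int.natAbs_natCast, if_neg (by omega), zpow_neg, zpow_natCast, mul_pow,
        inv_pow]

namespace PadicInt

variable {p : ℕ} [Fact p.Prime]

theorem isUnit_intCast_iff {k : ℤ} : IsUnit (k : ℤ_[p]) ↔ ¬ (p : ℤ) ∣ k := by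
  rw [← norm_int_lt_one_iff_dvd, ← not_isUnit_iff, not_not]

theorem isSquare_intCast_of_dvd_mul_self_sub {d s : ℤ} (hs : (p : ℤ) ∣ s * s - d)
    (h2s : ¬ (p : ℤ) ∣ 2 * s) : IsSquare (d : ℤ_[p]) := by
  have hderiv : ‖(s : ℤ_[p]) + s‖ = 1 := by
    simpa [two_mul] using isUnit_iff.mp (isUnit_intCast_iff.mpr h2s)
  have hval : ‖((s * s - d : ℤ) : ℤ_[p])‖ < 1 := (norm_int_lt_one_iff_dvd _).mpr hs
  obtain ⟨t, ht, -⟩ := hensels_lemma (F := Polynomial.X ^ 2 - Polynomial.C d) (a := (s : ℤ_[p]))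
    (by simpa [sq, hderiv] using hval)
  exact ⟨t, by simpa [sq, sub_eq_zero, eq_comm] using ht⟩

theorem isSquare_intCast_of_legendreSym_eq_one (hp : p ≠ 2) {d : ℤ} (h : legendreSym p d = 1) :
    IsSquare (d : ℤ_[p]) := by
  have hd : (d : ZMod p) ≠ 0 := fun h0 => by
    simp [(legendreSym.eq_zero_iff p d).mpr h0] at h
  obtain ⟨r, hr⟩ := (legendreSym.eq_one_iff p hd).mp h
  obtain ⟨s, rfl⟩ := ZMod.intCast_surjective r
  apply isSquare_intCast_of_dvd_mul_self_sub (s := s)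
  · rw [← ZMod.intCast_zmod_eq_zero_iff_dvd]
    push_cast
    rw [hr, sub_self]
  · rw [← ZMod.intCast_zmod_eq_zero_iff_dvd]
    push_cast
    refine mul_ne_zero (Ring.two_ne_zero ?_) ?_
    · rwa [ZMod.ringChar_zmod_n]
    · rintro hs0
      exact hd (by rw [hr, hs0, mul_zero])

theorem eq_zero_of_prod_pow_eq_mul_prod_pow {R ι : Type*} [CommRing R] [Fintype ι]
    (ψ : R →+* ℤ_[p]) {β : ι → R} {P n : ι → ℕ} {u : R}
    (hβ : ∀ j, IsUnit (ψ (β j))) (h : ∏ j, β j ^ n j = u * ∏ j, (P j : R) ^ n j) {i : ι}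
    (hi : P i = p) : n i = 0 := by
  have hP : IsUnit (∏ j, (P j : ℤ_[p]) ^ n j) := by
    have := congrArg ψ h
    simp only [map_prod, map_pow, map_mul, map_natCast] at this
    refine isUnit_of_mul_isUnit_right (x := ψ u) ?_
    rw [← this]
    exact IsUnit.prod_univ_iff.mpr fun j => (hβ j).pow _
  have hqi : IsUnit ((p : ℤ_[p]) ^ n i) := hi ▸ IsUnit.prod_univ_iff.mp hP i
  by_contra hn
  exact irreducible_p.not_isUnit ((isUnit_pow_iff hn).mp hqi)

end PadicInt

namespace Zsqrtd

variable {d : ℤ}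

theorem add_star_eq (z : ℤ√d) : z + star z = (2 * z.re : ℤ) := by
  ext <;> simp [two_mul]

theorem prod_pow_eq_of_prod_zpow_eq {K ι : Type*} [Field K] [Fintype ι] (φ : ℤ√d →+* K)
    (hφ : Function.Injective φ) {α : ι → ℤ√d} {P : ι → ℕ} (hα : ∀ j, (α j).norm = (P j : ℤ) ^ 2)
    (hP : ∀ j, (P j : K) ≠ 0) {e : ι → ℤ} {u : ℤ√d}
    (h : ∏ j, (φ (α j) / P j) ^ e j = φ u) :
    ∏ j, (if 0 ≤ e j then α j else star (α j)) ^ (e j).natAbs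
      = u * ∏ j, (P j : ℤ√d) ^ (e j).natAbs := by
  have hstar : ∀ j, φ (star (α j)) = (φ (α j) / P j)⁻¹ * P j := fun j => by
    have hnorm : φ (α j) * φ (star (α j)) = (P j : K) ^ 2 := by
      rw [← map_mul, ← norm_eq_mul_conj, hα, map_intCast]
      push_cast; rfl
    have hαj : φ (α j) ≠ 0 := left_ne_zero_of_mul (hnorm ▸ pow_ne_zero 2 (hP j))
    field_simp
    linear_combination hnorm
  apply hφ
  simp only [map_prod, map_pow, map_mul, map_natCast, apply_ite φ, hstar]
  rw [← h, ← Finset.prod_mul_distrib]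
  refine Finset.prod_congr rfl fun j _ => ?_
  rw [zpow_mul_pow_natAbs, div_mul_cancel₀ _ (hP j)]

theorem sqrt_mul_I_mul_self (D : ℕ) :
    ((Real.sqrt D : ℂ) * I) * ((Real.sqrt D : ℂ) * I) = ((-(D : ℤ) : ℤ) : ℂ) := by
  rw [mul_mul_mul_comm, I_mul_I, ← ofReal_mul, Real.mul_self_sqrt D.cast_nonneg]
  push_cast
  ring

noncomputable def toComplex (D : ℕ) : ℤ√(-(D : ℤ)) →+* ℂ :=
  lift ⟨Real.sqrt D * I, sqrt_mul_I_mul_self D⟩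

theorem toComplex_mk (D : ℕ) (a b : ℤ) :
    toComplex D ⟨a, b⟩ = a + b * (Real.sqrt D : ℂ) * I := by
  simp [toComplex, mul_assoc]

theorem toComplex_injective {D : ℕ} (hD : 0 < D) : Function.Injective (toComplex D) :=
  lift_injective _ fun n hn => by nlinarith [mul_self_nonneg n]

theorem norm_natCast_mk {D x y p : ℕ} (h : x ^ 2 + D * y ^ 2 = p ^ 2) :
    (⟨x, y⟩ : ℤ√(-(D : ℤ))).norm = (p : ℤ) ^ 2 := by
  rw [norm_def]
  linear_combination (norm := ring_nf) congrArg (Nat.cast (R := ℤ)) h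
  push_cast; ring

variable {q : ℕ} [Fact q.Prime]

theorem isUnit_map_of_not_dvd_norm (ψ : ℤ√d →+* ℤ_[q]) {z : ℤ√d} (hz : ¬ (q : ℤ) ∣ z.norm) :
    IsUnit (ψ z) :=
  isUnit_of_mul_isUnit_left (y := ψ (star z)) <| by
    rw [← map_mul, ← norm_eq_mul_conj, map_intCast]
    exact PadicInt.isUnit_intCast_iff.mpr hz

theorem exists_ringHom_padicInt_isUnit (hd : IsSquare (d : ℤ_[q])) {z : ℤ√d}
    (hz : ¬ (q : ℤ) ∣ 2 * z.re) : ∃ ψ : ℤ√d →+* ℤ_[q], IsUnit (ψ z) := by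
  obtain ⟨t, ht⟩ := hd
  let ψ : ℤ√d →+* ℤ_[q] := lift ⟨t, ht.symm⟩
  have hsum : IsUnit (ψ z + ψ (star z)) := by
    rw [← map_add, add_star_eq, map_intCast]
    exact PadicInt.isUnit_intCast_iff.mpr hz
  rcases IsLocalRing.isUnit_or_isUnit_of_isUnit_add hsum with h | h
  · exact ⟨ψ, h⟩
  · exact ⟨ψ.comp (starRingEnd _), h⟩

end Zsqrtd

theorem legendreSym.not_dvd_of_eq_one {p : ℕ} [Fact p.Prime] {a : ℤ} (h : legendreSym p a = 1) :
    ¬ (p : ℤ) ∣ a := fun hdvd => by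
  simp [(legendreSym.eq_zero_iff p a).mpr ((ZMod.intCast_zmod_eq_zero_iff_dvd a p).mpr hdvd)] at h

theorem Nat.Prime.not_dvd_of_sq_add_mul_sq_eq_sq {p D x y : ℕ} (hp : p.Prime) (hpD : ¬ p ∣ D)
    (h : x ^ 2 + D * y ^ 2 = p ^ 2) (hg : Nat.gcd (Nat.gcd x y) p = 1) : ¬ p ∣ x := fun hx => by
  have hDy : p ∣ D * y ^ 2 :=
    (Nat.dvd_add_right (dvd_pow hx two_ne_zero)).mp (h ▸ dvd_pow_self p two_ne_zero)
  rcases hp.dvd_mul.mp hDy with hD | hy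
  · exact hpD hD
  · exact hp.one_lt.ne' <| Nat.dvd_one.mp <|
      hg ▸ Nat.dvd_gcd (Nat.dvd_gcd hx (hp.dvd_of_dvd_pow hy)) dvd_rfl

theorem zeta_multiplicatively_independent_general
    (D : ℕ) (hD : 1 < D)
    (k : ℕ) (p : Fin k → ℕ) (hp : ∀ i, (p i).Prime) (hpodd : ∀ i, p i ≠ 2)
    (hpdist : Function.Injective p)
    (hleg : ∀ i, @legendreSym (p i) ⟨hp i⟩ (-(D : ℤ)) = 1)
    (x y : Fin k → ℕ)
    (hxy : ∀ i, 0 < x i ∧ 0 < y i ∧ (x i) ^ 2 + D * (y i) ^ 2 = (p i) ^ 2 ∧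
        Nat.gcd (Nat.gcd (x i) (y i)) (p i) = 1)
    (e : Fin k → ℤ)
    (h : ∏ i, (((x i : ℂ) + (y i : ℂ) * (Real.sqrt D : ℂ) * Complex.I) / (p i : ℂ)) ^ (e i) = 1
       ∨ ∏ i, (((x i : ℂ) + (y i : ℂ) * (Real.sqrt D : ℂ) * Complex.I) / (p i : ℂ)) ^ (e i)
           = -1) :
    (∀ i, e i = 0) ∧
      ∏ i, (((x i : ℂ) + (y i : ℂ) * (Real.sqrt D : ℂ) * Complex.I) / (p i : ℂ)) ^ (e i) = 1 := by
  suffices he : ∀ i, e i = 0 from ⟨he, by simp [he]⟩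
  intro i
  let α : Fin k → ℤ√(-(D : ℤ)) := fun j => ⟨x j, y j⟩
  have hα : ∀ j, (α j).norm = (p j : ℤ) ^ 2 := fun j => Zsqrtd.norm_natCast_mk (hxy j).2.2.1
  obtain ⟨u, hu⟩ : ∃ u, ∏ j, (Zsqrtd.toComplex D (α j) / p j) ^ e j = Zsqrtd.toComplex D u := by
    simp only [α, Zsqrtd.toComplex_mk, Int.cast_natCast]
    rcases h with h | h
    · exact ⟨1, by rw [h, map_one]⟩
    · exact ⟨-1, by rw [h, map_neg, map_one]⟩
  have hprod := Zsqrtd.prod_pow_eq_of_prod_zpow_eq _ (Zsqrtd.toComplex_injective (by omega)) hα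
    (fun j => Nat.cast_ne_zero.mpr (hp j).ne_zero) hu
  set β := fun j => if 0 ≤ e j then α j else star (α j)
  have hβ : ∀ j, (β j).re = x j ∧ (β j).norm = (p j : ℤ) ^ 2 := fun j => by
    simp only [β]
    split_ifs
    · exact ⟨rfl, hα j⟩
    · exact ⟨Zsqrtd.re_star _, (Zsqrtd.norm_conj _).trans (hα j)⟩
  have := Fact.mk (hp i)
  have hpD : ¬ p i ∣ D := fun hdvd =>
    legendreSym.not_dvd_of_eq_one (hleg i) (dvd_neg.mpr (Int.natCast_dvd_natCast.mpr hdvd))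
  have h2x : ¬ (p i : ℤ) ∣ 2 * (β i).re := by
    rw [(hβ i).1, ← Nat.cast_ofNat, ← Nat.cast_mul, Int.natCast_dvd_natCast,
      (hp i).dvd_mul, Nat.prime_dvd_prime_iff_eq (hp i) Nat.prime_two, not_or]
    exact ⟨hpodd i, (hp i).not_dvd_of_sq_add_mul_sq_eq_sq hpD (hxy i).2.2.1 (hxy i).2.2.2⟩
  obtain ⟨ψ, hψ⟩ := Zsqrtd.exists_ringHom_padicInt_isUnit
    (PadicInt.isSquare_intCast_of_legendreSym_eq_one (hpodd i) (hleg i)) h2x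
  have hunit : ∀ j, IsUnit (ψ (β j)) := fun j => by
    rcases eq_or_ne j i with rfl | hji
    · exact hψ
    refine Zsqrtd.isUnit_map_of_not_dvd_norm ψ ?_
    rw [(hβ j).2, ← Nat.cast_pow, Int.natCast_dvd_natCast, ← (hp i).coprime_iff_not_dvd]
    exact ((Nat.coprime_primes (hp i) (hp j)).mpr (hpdist.ne hji.symm)).pow_right 2
  exact Int.natAbs_eq_zero.mp (PadicInt.eq_zero_of_prod_pow_eq_mul_prod_pow ψ hunit hprod rfl)

/-- **Multiplicative independence of the `ζ_p` ([JMMM]).**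
Let `D > 1` be a squarefree integer with `D ≡ 1` or `2 (mod 4)` such that every element of the
ideal class group of `ℚ(√-D)` (equivalently, of `ℤ[√-D]`) has order dividing 2.  Let
`p 0, …, p (k-1)` be distinct odd primes with Legendre symbol `(-D / p i) = 1`, with
`ζ_{p i} = (x i + y i · √D · i)/(p i)` built from the unique positive solution
`(x i)² + D (y i)² = (p i)²`, `gcd(x i, y i, p i) = 1`.  If, for integers `e i`,
`∏ i, ζ_{p i} ^ (e i) ∈ {1, -1}`, then all `e i = 0` (and hence the product equals `1`);
in particular the `ζ_{p i}` are multiplicatively independent in `ℂ`. -/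
theorem zeta_multiplicatively_independent
    (D : ℕ) (hD : 1 < D) (hsf : Squarefree D) (hDmod : D % 4 = 1 ∨ D % 4 = 2)
    [IsDomain (ℤ√(-(D : ℤ)))]
    (hclass : ∀ x : ClassGroup (ℤ√(-(D : ℤ))), x ^ 2 = 1)
    (k : ℕ) (p : Fin k → ℕ) (hp : ∀ i, (p i).Prime) (hpodd : ∀ i, p i ≠ 2)
    (hpdist : Function.Injective p)
    (hleg : ∀ i, @legendreSym (p i) ⟨hp i⟩ (-(D : ℤ)) = 1)
    (x y : Fin k → ℕ)
    (hxy : ∀ i, 0 < x i ∧ 0 < y i ∧ (x i) ^ 2 + D * (y i) ^ 2 = (p i) ^ 2 ∧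
        Nat.gcd (Nat.gcd (x i) (y i)) (p i) = 1)
    (e : Fin k → ℤ)
    (h : ∏ i, (((x i : ℂ) + (y i : ℂ) * (Real.sqrt D : ℂ) * Complex.I) / (p i : ℂ)) ^ (e i) = 1
       ∨ ∏ i, (((x i : ℂ) + (y i : ℂ) * (Real.sqrt D : ℂ) * Complex.I) / (p i : ℂ)) ^ (e i)
           = -1) :
    (∀ i, e i = 0) ∧
      ∏ i, (((x i : ℂ) + (y i : ℂ) * (Real.sqrt D : ℂ) * Complex.I) / (p i : ℂ)) ^ (e i) = 1 :=
  zeta_multiplicatively_independent_general D hD k p hp hpodd hpdist hleg x y hxy e h
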